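/- arXiv:1105.3048 — 3 statements merged into one kernel-verified Lean document; each statement's English description precedes it below -/
import Mathlib

section
/- Let ν be a finite non-negative measure on ℝ with ν̂ ≥ 0 (real and non-negative Fourier transform). Then for any T > 0, ∫_ℝ (sin(Tu/2)/(Tu/2))² ν(du) ≤ (1/T)∫_{-T}^{T} ν̂(x) dx ≤ 3 ∫_ℝ (sin(Tu/2)/(Tu/2))² ν(du). -/
open MeasureTheory Real Set

noncomputable def sincSq (v : ℝ) : ℝ := (if v = 0 then 1 else Real.sin v / v) ^ 2

lemma sincSq_nonneg (v : ℝ) : 0 ≤ sincSq v := sq_nonneg _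

lemma sincSq_le_one (v : ℝ) : sincSq v ≤ 1 := by
  unfold sincSq
  rcases eq_or_ne v 0 with h | h
  · simp [h]
  · rw [if_neg h, sq_le_one_iff_abs_le_one, abs_div]
    exact div_le_one_of_le₀ Real.abs_sin_le_abs (abs_nonneg v)

lemma sincSq_meas : Measurable sincSq := by
  apply Measurable.pow_const
  exact Measurable.ite (measurableSet_eq) measurable_const (Real.measurable_sin.div measurable_id)

lemma sincSq_two_mul_le (s : ℝ) : sincSq (2 * s) ≤ sincSq s := by
  rcases eq_or_ne s 0 with h | h
  · simp [h]
  · unfold sincSq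
    rw [if_neg (by simpa using h), if_neg h, Real.sin_two_mul]
    have h1 : 2 * Real.sin s * Real.cos s / (2 * s) = Real.sin s / s * Real.cos s := by
      field_simp
    rw [h1, mul_pow]
    nlinarith [sq_nonneg (Real.sin s / s), Real.cos_sq_le_one s, sq_nonneg (Real.cos s)]



lemma tri_half (S x : ℝ) (hS : 0 < S) (hx : x ≠ 0) :
    ∫ t in (0:ℝ)..S, (1 - t / S) * Real.cos (t * x) = (1 - Real.cos (S * x)) / (S * x ^ 2) := by
  have hderiv : ∀ t ∈ Set.uIcc (0:ℝ) S, HasDerivAt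
      (fun t => (1 - t / S) * (Real.sin (t * x) / x) - Real.cos (t * x) / (S * x ^ 2))
      ((1 - t / S) * Real.cos (t * x)) t := by
    intro t _
    have h1 : HasDerivAt (fun t : ℝ => 1 - t / S) (-(1 / S)) t := by
      simpa using ((hasDerivAt_id t).div_const S).const_sub 1
    have h2 : HasDerivAt (fun t : ℝ => Real.sin (t * x)) (Real.cos (t * x) * x) t := by
      exact (Real.hasDerivAt_sin (t * x)).comp t (hasDerivAt_mul_const x)
    have h3 : HasDerivAt (fun t : ℝ => Real.cos (t * x)) (-Real.sin (t * x) * x) t := by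
      exact (Real.hasDerivAt_cos (t * x)).comp t (hasDerivAt_mul_const x)
    have := (h1.mul (h2.div_const x)).sub (h3.div_const (S * x ^ 2))
    refine this.congr_deriv ?_
    field_simp
    ring
  rw [intervalIntegral.integral_eq_sub_of_hasDerivAt hderiv
    (by apply Continuous.intervalIntegrable; continuity)]
  simp [div_self hS.ne', Real.cos_nonneg_of_mem_Icc]
  field_simp
  ring

lemma tri (S x : ℝ) (hS : 0 < S) :
    ∫ t in (-S)..S, (1 - |t| / S) * Real.cos (t * x) = S * sincSq (S * x / 2) := by
  have hcont : Continuous fun t : ℝ => (1 - |t| / S) * Real.cos (t * x) := by continuity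
  have hsplit : ∫ t in (-S)..S, (1 - |t| / S) * Real.cos (t * x)
      = (∫ t in (-S)..(0:ℝ), (1 - |t| / S) * Real.cos (t * x))
        + ∫ t in (0:ℝ)..S, (1 - |t| / S) * Real.cos (t * x) :=
    (intervalIntegral.integral_add_adjacent_intervals
      (hcont.intervalIntegrable _ _) (hcont.intervalIntegrable _ _)).symm
  have hneg : (∫ t in (-S)..(0:ℝ), (1 - |t| / S) * Real.cos (t * x))
      = ∫ t in (0:ℝ)..S, (1 - |t| / S) * Real.cos (t * x) := by
    have := intervalIntegral.integral_comp_neg (a := (0:ℝ)) (b := S)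
      (fun t => (1 - |t| / S) * Real.cos (t * x))
    rw [neg_zero] at this
    rw [← this]
    apply intervalIntegral.integral_congr
    intro t _
    simp [abs_neg, neg_mul, Real.cos_neg]
  have hpos : ∫ t in (0:ℝ)..S, (1 - |t| / S) * Real.cos (t * x)
      = ∫ t in (0:ℝ)..S, (1 - t / S) * Real.cos (t * x) := by
    apply intervalIntegral.integral_congr
    intro t ht
    rw [Set.uIcc_of_le hS.le] at ht
    simp only [abs_of_nonneg ht.1]
  rcases eq_or_ne x 0 with hx | hx
  · rw [hsplit, hneg, hpos]
    have e1 : (∫ t in (0:ℝ)..S, (1 - t / S)) = S / 2 := by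
      rw [intervalIntegral.integral_sub intervalIntegrable_const
        ((by continuity : Continuous fun t : ℝ => t / S).intervalIntegrable _ _),
        intervalIntegral.integral_div, integral_id]
      simp
      field_simp
      ring
    simp only [hx, mul_zero, Real.cos_zero, mul_one, zero_div, sincSq, if_pos rfl, one_pow]
    rw [e1]
    norm_num
  · rw [hsplit, hneg, hpos, tri_half S x hS hx]
    have hSx : S * x / 2 ≠ 0 := by
      simp [div_eq_zero_iff, hS.ne', hx]
    rw [sincSq, if_neg hSx]
    have hcos : Real.cos (S * x) = 1 - 2 * Real.sin (S * x / 2) ^ 2 := by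
      have h2 := Real.sin_sq_eq_half_sub (S * x / 2)
      rw [show 2 * (S * x / 2) = S * x by ring] at h2
      linarith
    rw [hcos]
    field_simp
    ring


variable {ν : Measure ℝ} [IsFiniteMeasure ν] {F : ℝ → ℝ}

lemma F_eq_cos (hF : ∀ t : ℝ, (∫ x : ℝ, Complex.exp (Complex.I * t * x) ∂ν) = (F t : ℂ))
    (t : ℝ) : F t = ∫ u, Real.cos (t * u) ∂ν := by
  have hform : ∀ x : ℝ, Complex.I * t * x = ((t * x : ℝ) : ℂ) * Complex.I := by
    intro x; push_cast; ring
  have hint : Integrable (fun x : ℝ => Complex.exp (Complex.I * t * x)) ν := by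
    apply Integrable.mono' (integrable_const (1 : ℝ))
    · exact (Continuous.aestronglyMeasurable (by continuity))
    · filter_upwards with x
      rw [hform x]
      rw [Complex.norm_exp_ofReal_mul_I]
  calc F t = ((F t : ℂ)).re := by simp
    _ = (∫ x, Complex.exp (Complex.I * t * x) ∂ν).re := by rw [hF]
    _ = ∫ x, (Complex.exp (Complex.I * t * x)).re ∂ν := (integral_re hint).symm
    _ = ∫ u, Real.cos (t * u) ∂ν := by
        apply integral_congr_ae
        filter_upwards with x
        rw [hform x, Complex.exp_ofReal_mul_I_re]

lemma F_cont (hF : ∀ t : ℝ, (∫ x : ℝ, Complex.exp (Complex.I * t * x) ∂ν) = (F t : ℂ)) :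
    Continuous F := by
  rw [show F = fun t => ∫ u, Real.cos (t * u) ∂ν from funext (F_eq_cos hF)]
  apply continuous_of_dominated (bound := fun _ => (1 : ℝ))
  · exact fun t => (Continuous.aestronglyMeasurable (by continuity))
  · intro t; filter_upwards with u; rw [Real.norm_eq_abs]; exact Real.abs_cos_le_one _
  · exact integrable_const 1
  · filter_upwards with u; continuity

lemma fub (hF : ∀ t : ℝ, (∫ x : ℝ, Complex.exp (Complex.I * t * x) ∂ν) = (F t : ℂ))
    (w : ℝ → ℝ) (hw : Continuous w) (S : ℝ) (hS : 0 ≤ S) :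
    ∫ t in (-S)..S, w t * F t = ∫ u, (∫ t in (-S)..S, w t * Real.cos (t * u)) ∂ν := by
  have hle : (-S : ℝ) ≤ S := by linarith
  obtain ⟨C, hC⟩ := (isCompact_Icc (a := -S) (b := S)).exists_bound_of_continuousOn
    hw.continuousOn
  have hfin : IsFiniteMeasure (volume.restrict (Ioc (-S) S)) :=
    ⟨by rw [Measure.restrict_apply_univ]; exact measure_Ioc_lt_top⟩
  have hint : Integrable (fun p : ℝ × ℝ => w p.1 * Real.cos (p.1 * p.2))
      ((volume.restrict (Ioc (-S) S)).prod ν) := by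
    apply Integrable.mono' (g := fun _ => C) (integrable_const C)
    · exact Continuous.aestronglyMeasurable (by continuity)
    · rw [Measure.restrict_prod_eq_prod_univ]
      refine Filter.eventually_of_mem (self_mem_ae_restrict
        ((measurableSet_Ioc).prod MeasurableSet.univ)) ?_
      rintro ⟨t, u⟩ ⟨ht, -⟩
      have h1 : ‖w t‖ ≤ C := hC t (Ioc_subset_Icc_self ht)
      calc ‖w t * Real.cos (t * u)‖ = ‖w t‖ * ‖Real.cos (t * u)‖ := norm_mul _ _
        _ ≤ C * 1 := by
            apply mul_le_mul h1 _ (norm_nonneg _) ((norm_nonneg _).trans h1)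
            rw [Real.norm_eq_abs]; exact Real.abs_cos_le_one _
        _ = C := mul_one C
  calc ∫ t in (-S)..S, w t * F t
      = ∫ t in Ioc (-S) S, (∫ u, w t * Real.cos (t * u) ∂ν) ∂volume := by
        rw [intervalIntegral.integral_of_le hle]
        apply setIntegral_congr_fun measurableSet_Ioc
        intro t _
        show w t * F t = ∫ u, w t * Real.cos (t * u) ∂ν
        rw [F_eq_cos hF t, MeasureTheory.integral_const_mul]
    _ = ∫ u, (∫ t in Ioc (-S) S, w t * Real.cos (t * u) ∂volume) ∂ν :=
        integral_integral_swap hint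
    _ = ∫ u, (∫ t in (-S)..S, w t * Real.cos (t * u)) ∂ν := by
        apply integral_congr_ae
        filter_upwards with u
        rw [intervalIntegral.integral_of_le hle]


variable {ν : Measure ℝ} [IsFiniteMeasure ν] {F : ℝ → ℝ}

lemma int_sincSq (g : ℝ → ℝ) (hg : Measurable g) : Integrable (fun u => sincSq (g u)) ν := by
  apply Integrable.mono' (integrable_const (1 : ℝ))
  · exact (sincSq_meas.comp hg).aestronglyMeasurable
  · filter_upwards with u
    rw [Real.norm_eq_abs, abs_of_nonneg (sincSq_nonneg _)]
    exact sincSq_le_one _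

lemma key (hF : ∀ t : ℝ, (∫ x : ℝ, Complex.exp (Complex.I * t * x) ∂ν) = (F t : ℂ))
    (S : ℝ) (hS : 0 < S) :
    ∫ t in (-S)..S, (1 - |t| / S) * F t = S * ∫ u, sincSq (S * u / 2) ∂ν := by
  rw [fub hF (fun t => 1 - |t| / S) (by continuity) S hS.le]
  rw [← MeasureTheory.integral_const_mul]
  apply integral_congr_ae
  filter_upwards with u
  exact tri S u hS

theorem stmt_3 (ν : Measure ℝ) [IsFiniteMeasure ν]
    (F : ℝ → ℝ) (hF : ∀ t : ℝ, (∫ x : ℝ, Complex.exp (Complex.I * t * x) ∂ν) = (F t : ℂ))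
    (hFpos : ∀ t, 0 ≤ F t) (T : ℝ) (hT : 0 < T) :
    ((∫ u, (if T * u / 2 = 0 then 1 else Real.sin (T * u / 2) / (T * u / 2)) ^ 2 ∂ν)
        ≤ (1 / T) * ∫ x in (-T)..T, F x) ∧
    ((1 / T) * ∫ x in (-T)..T, F x
        ≤ 3 * ∫ u, (if T * u / 2 = 0 then 1 else Real.sin (T * u / 2) / (T * u / 2)) ^ 2 ∂ν) := by
  have hFc : Continuous F := F_cont hF
  set G : ℝ := ∫ u, sincSq (T * u / 2) ∂ν with hG
  set G2 : ℝ := ∫ u, sincSq (T * u) ∂ν with hG2def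
  set A : ℝ := ∫ x in (-T)..T, F x with hA
  have hstmt : (∫ u, (if T * u / 2 = 0 then 1 else Real.sin (T * u / 2) / (T * u / 2)) ^ 2 ∂ν)
      = G := rfl
  have E1 : ∫ t in (-T)..T, (1 - |t| / T) * F t = T * G := key hF T hT
  have E2 : ∫ t in (-(2*T))..(2*T), (1 - |t| / (2*T)) * F t = (2*T) * G2 := by
    rw [key hF (2*T) (by linarith), hG2def]
    congr 1
    apply integral_congr_ae
    filter_upwards with u
    rw [show 2 * T * u / 2 = T * u by ring]
  have hG2le : G2 ≤ G := by
    rw [hG2def, hG]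
    apply integral_mono (int_sincSq (fun u => T * u) (measurable_id.const_mul T))
      (int_sincSq (fun u => T * u / 2) ((measurable_id.const_mul T).div_const 2))
    intro u
    show sincSq (T * u) ≤ sincSq (T * u / 2)
    have h := sincSq_two_mul_le (T * u / 2)
    rw [show 2 * (T * u / 2) = T * u by ring] at h
    exact h
  have h1 : T * G ≤ A := by
    rw [← E1, hA]
    apply intervalIntegral.integral_mono_on (by linarith)
      ((((continuous_const.sub ((continuous_abs).div_const T)).mul hFc)).intervalIntegrable _ _)
      (hFc.intervalIntegrable _ _)
    intro t _
    have h2 : 1 - |t| / T ≤ 1 := by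
      have := div_nonneg (abs_nonneg t) hT.le
      linarith
    show (1 - |t| / T) * F t ≤ F t
    nlinarith [hFpos t]
  have hId : A = 2 * (∫ t in (-T)..T, (1 - |t| / (2*T)) * F t) - T * G := by
    rw [← E1, hA]
    have hptw : ∀ t : ℝ, F t = 2 * ((1 - |t| / (2*T)) * F t) - (1 - |t| / T) * F t := by
      intro t
      have hT' : (T : ℝ) ≠ 0 := hT.ne'
      field_simp
      ring
    calc (∫ x in (-T)..T, F x)
        = ∫ t in (-T)..T, (2 * ((1 - |t| / (2*T)) * F t) - (1 - |t| / T) * F t) :=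
          intervalIntegral.integral_congr (fun t _ => hptw t)
      _ = 2 * (∫ t in (-T)..T, (1 - |t| / (2*T)) * F t)
            - ∫ t in (-T)..T, (1 - |t| / T) * F t := by
          have i1 : IntervalIntegrable (fun t => (1 - |t| / (2*T)) * F t) volume (-T) T :=
            ((continuous_const.sub (continuous_abs.div_const (2*T))).mul hFc).intervalIntegrable _ _
          have i2 : IntervalIntegrable (fun t => (1 - |t| / T) * F t) volume (-T) T :=
            ((continuous_const.sub (continuous_abs.div_const T)).mul hFc).intervalIntegrable _ _
          rw [intervalIntegral.integral_sub (i1.const_mul 2) i2,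
            intervalIntegral.integral_const_mul]
  have hmono : (∫ t in (-T)..T, (1 - |t| / (2*T)) * F t)
      ≤ ∫ t in (-(2*T))..(2*T), (1 - |t| / (2*T)) * F t := by
    apply intervalIntegral.integral_mono_interval (by linarith) (by linarith) (by linarith)
    · refine Filter.eventually_of_mem (self_mem_ae_restrict measurableSet_Ioc) ?_
      intro t ht
      have habs : |t| ≤ 2*T := abs_le.mpr ⟨by linarith [ht.1], ht.2⟩
      have : |t| / (2*T) ≤ 1 := (div_le_one (by linarith)).mpr habs
      exact mul_nonneg (by linarith) (hFpos t)
    · exact (((continuous_const.sub ((continuous_abs).div_const (2*T))).mul hFc)).intervalIntegrable _ _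
  have h2 : A ≤ 3 * (T * G) := by
    have hTG2 : T * G2 ≤ T * G := mul_le_mul_of_nonneg_left hG2le hT.le
    calc A = 2 * (∫ t in (-T)..T, (1 - |t| / (2*T)) * F t) - T * G := hId
      _ ≤ 2 * ((2*T) * G2) - T * G := by linarith [hmono]
      _ = 4 * (T * G2) - T * G := by ring
      _ ≤ 4 * (T * G) - T * G := by linarith
      _ = 3 * (T * G) := by ring
  rw [hstmt]
  constructor
  · rw [one_div_mul_eq_div, le_div_iff₀ hT, mul_comm]
    exact h1
  · rw [one_div_mul_eq_div, div_le_iff₀ hT]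
    calc A ≤ 3 * (T * G) := h2
      _ = 3 * G * T := by ring
end

section
/- Let ν be a finite non-negative measure on ℝ. For any positive integer κ and any T > 0, |∫_ℝ (sin(Tu/2)/(Tu/2))^{2κ} ν(du)| ≤ (1/T)∫_{-κT}^{κT} |ν̂(x)| dx. -/
open MeasureTheory

set_option maxHeartbeats 1000000 in
theorem stmt_4 (ν : Measure ℝ) [IsFiniteMeasure ν] (κ : ℕ) (hκ : 0 < κ) (T : ℝ) (hT : 0 < T) :
    |∫ u, (if T * u / 2 = 0 then 1 else Real.sin (T * u / 2) / (T * u / 2)) ^ (2 * κ) ∂ν|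
      ≤ (1 / T) * ∫ x in (-(κ : ℝ) * T)..((κ : ℝ) * T),
          ‖∫ y, Complex.exp (Complex.I * x * y) ∂ν‖ := by
  set a : ℝ := T / 2 with ha_def
  have ha : 0 < a := by positivity
  set S : ℝ → ℝ := fun u => if T * u / 2 = 0 then 1 else Real.sin (T * u / 2) / (T * u / 2)
    with hS_def
  have hS1 : ∀ u, |S u| ≤ 1 := by
    intro u
    simp only [hS_def]
    split_ifs with h
    · simp
    · rw [abs_div]
      exact div_le_one_of_le₀ Real.abs_sin_le_abs (abs_nonneg _)
  -- measurability of S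
  have hSm : Measurable S := by
    apply Measurable.ite
    · exact measurableSet_eq_fun (by fun_prop) measurable_const
    · exact measurable_const
    · fun_prop
  set c : ℝ → ℂ := fun x => ∫ y, Complex.exp (Complex.I * x * y) ∂ν with hc_def
  have hc_cont : Continuous c := by
    apply continuous_of_dominated (bound := fun _ => 1)
    · intro x
      exact (Continuous.aestronglyMeasurable (by continuity))
    · intro x
      filter_upwards with y
      have : Complex.I * (x:ℂ) * (y:ℂ) = ((x*y : ℝ) : ℂ) * Complex.I := by push_cast; ring
      rw [this, Complex.norm_exp_ofReal_mul_I]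
    · exact integrable_const 1
    · filter_upwards with y
      continuity
  set K : ℝ := ∫ x in (-(κ : ℝ) * T)..((κ : ℝ) * T), ‖c x‖ with hK_def
  -- the sinc identity
  have hsinc : ∀ u : ℝ, (∫ x in (-a)..a, Complex.exp (Complex.I * x * u))
      = 2 * a * (S u : ℂ) := by
    intro u
    rcases eq_or_ne u 0 with hu | hu
    · subst hu
      have h0 : S 0 = 1 := by simp [hS_def]
      simp only [Complex.ofReal_zero, mul_zero, Complex.exp_zero, h0, Complex.ofReal_one,
        mul_one]
      rw [intervalIntegral.integral_const, Complex.real_smul]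
      push_cast
      ring
    · have hIu : Complex.I * (u : ℂ) ≠ 0 := by
        simp [Complex.I_ne_zero, Complex.ofReal_eq_zero, hu]
      have : ∀ x : ℝ, Complex.I * (x:ℂ) * (u:ℂ) = (Complex.I * u) * (x:ℂ) := by
        intro x; ring
      rw [intervalIntegral.integral_congr (g := fun x : ℝ =>
        Complex.exp ((Complex.I * u) * (x:ℂ))) (fun x _ => by rw [this x])]
      rw [integral_exp_mul_complex hIu]
      have hSu : S u = Real.sin (a * u) / (a * u) := by
        have : T * u / 2 ≠ 0 := by
          intro h
          apply hu
          have h' : T * u = 0 := by linarith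
          rcases mul_eq_zero.mp h' with h'' | h''
          · exact absurd h'' (ne_of_gt hT)
          · exact h''
        simp only [hS_def, if_neg this]
        rw [ha_def]
        ring_nf
      rw [hSu]
      have hau : (a : ℂ) * u ≠ 0 := by
        simp [Complex.ofReal_eq_zero, hu, ne_of_gt ha]
      have hexp1 : Complex.I * (u:ℂ) * (a:ℂ) = ((a*u : ℝ):ℂ) * Complex.I := by
        push_cast; ring
      have hexp2 : Complex.I * (u:ℂ) * ((-a : ℝ):ℂ) = -(((a*u : ℝ):ℂ) * Complex.I) := by
        push_cast; ring
      rw [hexp1, hexp2]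
      have hsin : Complex.exp (((a*u : ℝ):ℂ) * Complex.I)
          - Complex.exp (-(((a*u : ℝ):ℂ) * Complex.I))
          = 2 * Complex.I * Complex.sin ((a*u : ℝ):ℂ) := by
        rw [Complex.sin]
        ring_nf
        rw [Complex.I_sq]
        ring
      rw [hsin, ← Complex.ofReal_sin]
      push_cast
      field_simp
      linear_combination (-(Complex.sin ((a:ℂ) * (u:ℂ)) * (u:ℂ)⁻¹)) * (mul_inv_cancel₀ (Complex.ofReal_ne_zero.mpr ha.ne'))
  -- Fubini identity
  have hid : ∀ (m : ℕ) (s : ℝ),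
      (∫ u, (S u : ℂ) ^ (m+1) * Complex.exp (Complex.I * s * u) ∂ν)
      = (1/(2*a)) * ∫ x in (-a)..a,
          ∫ u, (S u : ℂ) ^ m * Complex.exp (Complex.I * ((s+x : ℝ) : ℂ) * u) ∂ν := by
    intro m s
    have hrestr : IsFiniteMeasure (volume.restrict (Set.Ioc (-a) a)) :=
      ⟨by rw [Measure.restrict_apply_univ, Real.volume_Ioc]; exact ENNReal.ofReal_lt_top⟩
    have key : ∀ u : ℝ, (S u : ℂ) ^ (m+1) * Complex.exp (Complex.I * s * u)
        = (1/(2*a)) * ∫ x in (-a)..a,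
            (S u : ℂ) ^ m * Complex.exp (Complex.I * ((s+x : ℝ) : ℂ) * u) := by
      intro u
      have h1 : ∀ x : ℝ, (S u : ℂ) ^ m * Complex.exp (Complex.I * ((s+x : ℝ) : ℂ) * u)
          = ((S u : ℂ) ^ m * Complex.exp (Complex.I * s * u))
            * Complex.exp (Complex.I * x * u) := by
        intro x
        have hx : Complex.I * ((s+x : ℝ) : ℂ) * (u:ℂ)
            = Complex.I * (s:ℂ) * (u:ℂ) + Complex.I * (x:ℂ) * (u:ℂ) := by push_cast; ring
        rw [hx, Complex.exp_add]
        ring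
      rw [intervalIntegral.integral_congr (fun x _ => h1 x),
        intervalIntegral.integral_const_mul, hsinc u]
      have h2a : (2*a : ℂ) ≠ 0 := by
        have h2a' : (2*a : ℝ) ≠ 0 := by positivity
        exact_mod_cast h2a'
      push_cast
      field_simp
      linear_combination (-((S u : ℂ) * (S u : ℂ) ^ m)) * (mul_inv_cancel₀ (Complex.ofReal_ne_zero.mpr ha.ne'))
    rw [integral_congr_ae (Filter.Eventually.of_forall key), integral_const_mul]
    congr 1
    -- swap order of integration
    rw [intervalIntegral.integral_of_le (by linarith : -a ≤ a)]
    have hint : Integrable (Function.uncurry fun (u : ℝ) (x : ℝ) =>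
        (S u : ℂ) ^ m * Complex.exp (Complex.I * ((s+x : ℝ) : ℂ) * u))
        (ν.prod (volume.restrict (Set.Ioc (-a) a))) := by
      apply Integrable.mono' (integrable_const 1)
      · apply Measurable.aestronglyMeasurable
        apply Measurable.mul
        · exact ((Complex.measurable_ofReal.comp (hSm.comp measurable_fst)).pow
            measurable_const)
        · apply Complex.measurable_exp.comp
          fun_prop
      · filter_upwards with p
        rw [Function.uncurry]
        rw [norm_mul]
        have he : Complex.I * ((s + p.2 : ℝ):ℂ) * (p.1:ℂ)
            = (((s + p.2) * p.1 : ℝ):ℂ) * Complex.I := by push_cast; ring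
        rw [he, Complex.norm_exp_ofReal_mul_I, mul_one, norm_pow, Complex.norm_real]
        calc ‖S p.1‖ ^ m ≤ 1 ^ m := pow_le_pow_left₀ (norm_nonneg _) (hS1 p.1) m
          _ = 1 := one_pow m
    simp only [intervalIntegral.integral_of_le (show -a ≤ a by linarith)]
    exact MeasureTheory.integral_integral_swap hint
  -- integrability of ‖c‖ on the big interval
  have hcint : IntegrableOn (fun x => ‖c x‖) (Set.Ioc (-(κ : ℝ) * T) ((κ : ℝ) * T)) volume :=
    (hc_cont.norm.integrableOn_Ioc)
  -- the main induction
  have key : ∀ m : ℕ, ∀ s : ℝ, |s| + (m+1) * a ≤ 2 * κ * a →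
      ‖∫ u, (S u : ℂ) ^ (m+1) * Complex.exp (Complex.I * s * u) ∂ν‖ ≤ (1/(2*a)) * K := by
    intro m
    induction m with
    | zero =>
      intro s hs
      have hs' : |s| ≤ 2*(κ:ℝ)*a - a := by push_cast at hs; linarith
      rw [hid 0 s]
      have h1 : ∀ x : ℝ, (∫ u, (S u : ℂ) ^ 0 * Complex.exp (Complex.I * ((s+x : ℝ) : ℂ) * u) ∂ν)
          = c (s + x) := by
        intro x
        simp only [pow_zero, one_mul, hc_def]
      rw [intervalIntegral.integral_congr (fun x _ => h1 x)]
      rw [norm_mul]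
      have h2 : ‖(1/(2*a) : ℂ)‖ = 1/(2*a) := by
        rw [show ((1/(2*a) : ℂ)) = ((1/(2*a) : ℝ) : ℂ) by push_cast; ring, Complex.norm_real,
          Real.norm_eq_abs, abs_of_pos (by positivity)]
      rw [h2]
      refine mul_le_mul_of_nonneg_left ?_ (by positivity)
      calc ‖∫ x in (-a)..a, c (s + x)‖
          ≤ ∫ x in (-a)..a, ‖c (s + x)‖ :=
            intervalIntegral.norm_integral_le_integral_norm (by linarith)
        _ = ∫ x in (s + -a)..(s + a), ‖c x‖ :=
            intervalIntegral.integral_comp_add_left (fun x => ‖c x‖) s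
        _ ≤ K := by
          rw [hK_def]
          have hκ1 : (1:ℝ) ≤ (κ:ℝ) := by exact_mod_cast hκ
          have hT2 : T = 2 * a := by rw [ha_def]; ring
          have hκT : 0 < (κ:ℝ) * T := by positivity
          have habs := abs_le.1 hs'
          rw [intervalIntegral.integral_of_le (by linarith : s + -a ≤ s + a),
            intervalIntegral.integral_of_le (by linarith : -(κ : ℝ) * T ≤ (κ : ℝ) * T)]
          apply setIntegral_mono_set hcint
          · filter_upwards with x using norm_nonneg _
          · apply HasSubset.Subset.eventuallyLE
            apply Set.Ioc_subset_Ioc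
            · rw [hT2]; linarith [habs.1]
            · rw [hT2]; linarith [habs.2]
    | succ m ih =>
      intro s hs
      rw [hid (m+1) s]
      rw [norm_mul]
      have h2 : ‖(1/(2*a) : ℂ)‖ = 1/(2*a) := by
        rw [show ((1/(2*a) : ℂ)) = ((1/(2*a) : ℝ) : ℂ) by push_cast; ring, Complex.norm_real,
          Real.norm_eq_abs, abs_of_pos (by positivity)]
      rw [h2]
      have hb : ‖∫ x in (-a)..a,
          ∫ u, (S u : ℂ) ^ (m+1) * Complex.exp (Complex.I * ((s+x : ℝ) : ℂ) * u) ∂ν‖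
          ≤ (1/(2*a)) * K * |a - (-a)| := by
        apply intervalIntegral.norm_integral_le_of_norm_le_const
        intro x hx
        rw [Set.uIoc_of_le (by linarith : -a ≤ a)] at hx
        have hxa : |x| ≤ a := abs_le.2 ⟨le_of_lt hx.1, hx.2⟩
        refine ih (s+x) ?_
        push_cast at hs ⊢
        calc |s + x| + (m+1) * a ≤ |s| + |x| + (m+1) * a := by
              gcongr; exact abs_add_le s x
          _ ≤ |s| + a + (m+1) * a := by linarith
          _ = |s| + (m+1+1) * a := by ring
          _ ≤ 2 * κ * a := hs
      calc (1/(2*a)) * ‖∫ x in (-a)..a,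
            ∫ u, (S u : ℂ) ^ (m+1) * Complex.exp (Complex.I * ((s+x : ℝ) : ℂ) * u) ∂ν‖
          ≤ (1/(2*a)) * ((1/(2*a)) * K * |a - (-a)|) := by gcongr
        _ = (1/(2*a)) * K := by
            rw [abs_of_pos (by linarith : (0:ℝ) < a - (-a))]
            field_simp
            ring
  -- apply key at m = 2κ - 1, s = 0
  have h2κ : 2 * κ - 1 + 1 = 2 * κ := Nat.sub_add_cancel (by omega)
  have hc1 : ((2*κ-1 : ℕ):ℝ) + 1 = 2*(κ:ℝ) := by
    rw [Nat.cast_sub (by omega : 1 ≤ 2*κ)]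
    push_cast
    ring
  have hfin := key (2 * κ - 1) 0 (by rw [abs_zero, hc1]; linarith)
  rw [h2κ] at hfin
  have heq2 : (∫ u, ((S u ^ (2*κ) : ℝ) : ℂ) ∂ν) = ((∫ u, (S u) ^ (2*κ) ∂ν : ℝ) : ℂ) :=
    integral_ofReal
  have heq : (∫ u, (S u : ℂ) ^ (2*κ) * Complex.exp (Complex.I * (0:ℝ) * u) ∂ν)
      = ((∫ u, (S u) ^ (2*κ) ∂ν : ℝ) : ℂ) := by
    rw [← heq2]
    apply integral_congr_ae
    filter_upwards with u
    push_cast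
    simp
  rw [heq, Complex.norm_real, Real.norm_eq_abs] at hfin
  calc |∫ u, (S u) ^ (2*κ) ∂ν| ≤ (1/(2*a)) * K := hfin
    _ = (1 / T) * K := by rw [ha_def]; ring_nf
end

section
/- Let 0 < A₁ ≤ A₂ ≤ … ≤ A_J and let g be the J-fold convolution of the indicator functions of [-A₁,A₁], …, [-A_J,A_J]. Then 0 ≤ g(x) ≤ G_J · χ_{[-(A₁+…+A_J), A₁+…+A_J]}(x), where G_J = 2^{J-1} A₁ · ((A₁+A₂) ∧ A₃) · ((A₁+A₂+A₃) ∧ A₄) ⋯ ((A₁+…+A_{J-1}) ∧ A_J). -/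
open MeasureTheory Set

noncomputable def conv6 (f g : ℝ → ℝ) (x : ℝ) : ℝ := ∫ y, f (x - y) * g y

noncomputable def indA (A : ℝ) : ℝ → ℝ := (Icc (-A) A).indicator (fun _ => (1:ℝ))

noncomputable def convIter (A : ℕ → ℝ) : ℕ → ℝ → ℝ
  | 0 => indA (A 0)
  | n + 1 => conv6 (convIter A n) (indA (A (n + 1)))

noncomputable def Mb (A : ℕ → ℝ) : ℕ → ℝ
  | 0 => 1
  | n + 1 => Mb A n * (2 * min (∑ i ∈ Finset.range (n + 1), A i) (A (n + 1)))

lemma indA_nonneg (A x : ℝ) : 0 ≤ indA A x :=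
  Set.indicator_nonneg (fun _ _ => zero_le_one) x

lemma indA_le_one (A x : ℝ) : indA A x ≤ 1 := by
  unfold indA Set.indicator
  split <;> norm_num

lemma key_s6 (A : ℕ → ℝ) : ∀ n, (∀ i, i ≤ n → 0 < A i) →
    (0 ≤ Mb A n) ∧ ∀ x : ℝ,
      0 ≤ convIter A n x ∧ convIter A n x ≤ Mb A n ∧
      ((∑ i ∈ Finset.range (n + 1), A i) < |x| → convIter A n x = 0) := by
  intro n
  induction n with
  | zero =>
    intro hpos
    refine ⟨zero_le_one, fun x => ?_⟩
    refine ⟨indA_nonneg _ _, indA_le_one _ _, fun hx => ?_⟩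
    simp only [zero_add, Finset.sum_range_one] at hx
    have hnot : x ∉ Icc (-(A 0)) (A 0) := by
      intro hmem
      rw [mem_Icc] at hmem
      rcases lt_abs.mp hx with h | h <;> linarith [hmem.1, hmem.2]
    show indA (A 0) x = 0
    exact Set.indicator_of_notMem hnot _
  | succ n IH =>
    intro hpos
    have hpos' : ∀ i, i ≤ n → 0 < A i := fun i hi => hpos i (hi.trans (Nat.le_succ n))
    obtain ⟨hM, hIH⟩ := IH hpos'
    set S : ℝ := ∑ i ∈ Finset.range (n + 1), A i with hS
    have hSpos : 0 < S := Finset.sum_pos (fun i hi => hpos' i (Nat.lt_succ_iff.mp (Finset.mem_range.mp hi))) ⟨0, Finset.mem_range.mpr (Nat.succ_pos n)⟩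
    have hA' : 0 < A (n + 1) := hpos _ le_rfl
    have hminpos : 0 < min S (A (n + 1)) := lt_min hSpos hA'
    have hMb1 : 0 ≤ Mb A (n + 1) := by
      show 0 ≤ Mb A n * (2 * min S (A (n + 1)))
      positivity
    refine ⟨hMb1, fun x => ?_⟩
    have hnn : ∀ y, 0 ≤ convIter A n (x - y) * indA (A (n + 1)) y :=
      fun y => mul_nonneg (hIH _).1 (indA_nonneg _ _)
    refine ⟨integral_nonneg hnn, ?_, ?_⟩
    · -- upper bound
      set s : Set ℝ := Icc (x - S) (x + S) ∩ Icc (-(A (n + 1))) (A (n + 1)) with hs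
      have hsm : MeasurableSet s := (measurableSet_Icc.inter measurableSet_Icc)
      have hle : ∀ y, convIter A n (x - y) * indA (A (n + 1)) y ≤
          s.indicator (fun _ => Mb A n) y := by
        intro y
        by_cases hy1 : y ∈ Icc (-(A (n + 1))) (A (n + 1))
        · by_cases hy2 : y ∈ Icc (x - S) (x + S)
          · rw [Set.indicator_of_mem (Set.mem_inter hy2 hy1)]
            calc convIter A n (x - y) * indA (A (n + 1)) y
                ≤ Mb A n * 1 := mul_le_mul (hIH _).2.1 (indA_le_one _ _) (indA_nonneg _ _) hM
              _ = Mb A n := mul_one _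
          · have : convIter A n (x - y) = 0 := by
              apply (hIH _).2.2
              rw [mem_Icc] at hy2
              push_neg at hy2
              rcases lt_or_ge y (x - S) with h | h
              · exact lt_abs.mpr (Or.inl (by linarith))
              · exact lt_abs.mpr (Or.inr (by linarith [hy2 h]))
            rw [this, zero_mul]
            exact Set.indicator_nonneg (fun _ _ => hM) y
        · rw [show indA (A (n + 1)) y = 0 from Set.indicator_of_notMem hy1 _, mul_zero]
          exact Set.indicator_nonneg (fun _ _ => hM) y
      have hint : Integrable (s.indicator (fun _ => Mb A n)) := by
        rw [integrable_indicator_iff hsm]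
        apply (integrableOn_const_iff (C := Mb A n)).mpr
        right
        exact lt_of_le_of_lt (measure_mono Set.inter_subset_right) (by simp [Real.volume_Icc])
      have h1 : convIter A (n + 1) x ≤ ∫ y, s.indicator (fun _ => Mb A n) y :=
        integral_mono_of_nonneg (Filter.Eventually.of_forall hnn) hint
          (Filter.Eventually.of_forall hle)
      refine h1.trans ?_
      rw [integral_indicator_const _ hsm]
      have hvol : s = Icc (max (x - S) (-(A (n + 1)))) (min (x + S) (A (n + 1))) := by
        rw [hs, Set.Icc_inter_Icc]
      rw [hvol, measureReal_def, Real.volume_Icc, smul_eq_mul]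
      have hle2 : (ENNReal.ofReal (min (x + S) (A (n + 1)) - max (x - S) (-A (n + 1)))).toReal
          ≤ 2 * min S (A (n + 1)) := by
        rw [ENNReal.toReal_ofReal']
        apply max_le
        · rcases le_total S (A (n + 1)) with h | h
          · rw [min_eq_left h]
            have h1 : min (x + S) (A (n + 1)) ≤ x + S := min_le_left _ _
            have h2 : x - S ≤ max (x - S) (-A (n + 1)) := le_max_left _ _
            linarith
          · rw [min_eq_right h]
            have h1 : min (x + S) (A (n + 1)) ≤ A (n + 1) := min_le_right _ _
            have h2 : -A (n + 1) ≤ max (x - S) (-A (n + 1)) := le_max_right _ _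
            linarith
        · linarith [hminpos]
      calc (ENNReal.ofReal (min (x + S) (A (n + 1)) - max (x - S) (-A (n + 1)))).toReal * Mb A n
          ≤ (2 * min S (A (n + 1))) * Mb A n := mul_le_mul_of_nonneg_right hle2 hM
        _ = Mb A (n + 1) := by simp only [Mb]; ring
    · -- support
      intro hx
      rw [Finset.sum_range_succ] at hx
      have hzero : (fun y => convIter A n (x - y) * indA (A (n + 1)) y) = fun _ => (0:ℝ) := by
        funext y
        by_cases hy : y ∈ Icc (-(A (n + 1))) (A (n + 1))
        · have hyabs : |y| ≤ A (n + 1) := abs_le.mpr (mem_Icc.mp hy)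
          have : S < |x - y| := by
            have := abs_sub_abs_le_abs_sub x y
            linarith
          rw [(hIH _).2.2 this, zero_mul]
        · rw [show indA (A (n + 1)) y = 0 from Set.indicator_of_notMem hy _, mul_zero]
      show ∫ y, convIter A n (x - y) * indA (A (n + 1)) y = 0
      rw [hzero, integral_zero]

lemma Mb_formula (A : ℕ → ℝ) (h01 : min (A 0) (A 1) = A 0) :
    ∀ n, 1 ≤ n → Mb A n =
      2 ^ n * A 0 * ∏ j ∈ Finset.Ico 2 (n + 1), min (∑ i ∈ Finset.range j, A i) (A j) := by
  intro n hn
  induction n, hn using Nat.le_induction with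
  | base => simp [Mb, Finset.sum_range_one, h01]
  | succ n hn IH =>
    rw [show Mb A (n + 1) = Mb A n * (2 * min (∑ i ∈ Finset.range (n + 1), A i) (A (n + 1)))
        from rfl, IH, Finset.prod_Ico_succ_top (by omega : 2 ≤ n + 1)]
    ring

theorem stmt_6 (J : ℕ) (hJ : 2 ≤ J) (A : ℕ → ℝ) (hA0 : 0 < A 0)
    (hmono : ∀ i, i + 1 < J → A i ≤ A (i + 1)) (x : ℝ) :
    0 ≤ convIter A (J - 1) x ∧
    convIter A (J - 1) x
      ≤ (2 ^ (J - 1) * A 0 * ∏ j ∈ Finset.Ico 2 J, min (∑ i ∈ Finset.range j, A i) (A j))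
        * (Icc (-(∑ i ∈ Finset.range J, A i)) (∑ i ∈ Finset.range J, A i)).indicator
            (fun _ => (1:ℝ)) x := by
  obtain ⟨m, rfl⟩ : ∃ m, J = m + 2 := ⟨J - 2, by omega⟩
  have hpos : ∀ i, i ≤ m + 1 → 0 < A i := by
    intro i hi
    induction i with
    | zero => exact hA0
    | succ k IHk => exact lt_of_lt_of_le (IHk (by omega)) (hmono k (by omega))
  obtain ⟨hM, hkey⟩ := key_s6 A (m + 1) hpos
  simp only [show m + 1 + 1 = m + 2 from rfl] at hkey
  simp only [show m + 2 - 1 = m + 1 from rfl]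
  refine ⟨(hkey x).1, ?_⟩
  have h01 : min (A 0) (A 1) = A 0 := min_eq_left (hmono 0 (by omega))
  have hform := Mb_formula A h01 (m + 1) (by omega)
  simp only [show m + 1 + 1 = m + 2 from rfl] at hform
  set S := ∑ i ∈ Finset.range (m + 2), A i with hSdef
  by_cases hx : x ∈ Icc (-S) S
  · rw [Set.indicator_of_mem hx, mul_one]
    exact (hkey x).2.1.trans_eq hform
  · rw [Set.indicator_of_notMem hx, mul_zero]
    have hxa : S < |x| := by
      rw [mem_Icc] at hx
      push_neg at hx
      rcases le_or_gt (-S) x with h | h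
      · exact lt_abs.mpr (Or.inl (hx h))
      · exact lt_abs.mpr (Or.inr (by linarith))
    rw [(hkey x).2.2 hxa]
end
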